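/- arXiv:1611.03090 — 5 statements merged into one kernel-verified Lean document; each statement's English description precedes it below -/
import Mathlib

section
/- There do not exist a nonzero vector u ∈ ℝ², radii ρ > 0 and σ > 0, and centers x₀, x₁, x₂ ∈ ℝ² (pairwise distinct) and y₀, y₁, y₂ ∈ ℝ² (pairwise distinct) such that every xᵢ − x₀ and every yⱼ − y₀ is a scalar multiple of u (each family of centers lies on a line, the two lines being parallel), and such that for all i and j the circle (xᵢ, ρ) is tangent to the circle (yⱼ, σ). -/
noncomputable section

open RealInnerProductSpace

/-- The Euclidean plane. -/
abbrev Plane := EuclideanSpace ℝ (Fin 2)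

/-- Two circles (center, radius) are tangent: they are distinct and the distance between
centers equals the sum (external) or the absolute difference (internal) of the radii. -/
def Tangent (A B : Plane × ℝ) : Prop :=
  A ≠ B ∧ (dist A.1 B.1 = A.2 + B.2 ∨ dist A.1 B.1 = |A.2 - B.2|)

/-- The point of the plane with the given coordinates. -/
def pt (x y : ℝ) : Plane := WithLp.toLp 2 ![x, y]

private lemma pairneg {a b : ℝ} (hab : a ≠ b) (h : a ^ 2 = b ^ 2) : a + b = 0 := by
  rcases mul_eq_zero.mp (show (a - b) * (a + b) = 0 by linear_combination h) with h' | h'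
  · exact absurd (sub_eq_zero.mp h') hab
  · exact h'

private lemma col (m0 m1 m2 P Q : ℝ) (d01 : m0 ≠ m1) (d02 : m0 ≠ m2) (d12 : m1 ≠ m2)
    (e0 : m0 ^ 2 = P ∨ m0 ^ 2 = Q) (e1 : m1 ^ 2 = P ∨ m1 ^ 2 = Q)
    (e2 : m2 ^ 2 = P ∨ m2 ^ 2 = Q) :
    m0 + m1 = 0 ∨ m0 + m2 = 0 ∨ m1 + m2 = 0 := by
  rcases e0 with e0 | e0 <;> rcases e1 with e1 | e1 <;> rcases e2 with e2 | e2 <;>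
  first
  | exact Or.inl (pairneg d01 (e0.trans e1.symm))
  | exact Or.inr (Or.inl (pairneg d02 (e0.trans e2.symm)))
  | exact Or.inr (Or.inr (pairneg d12 (e1.trans e2.symm)))

set_option maxHeartbeats 2000000 in
private lemma key (t0 t1 t2 s0 s1 s2 : ℝ)
    (ht01 : t0 ≠ t1) (ht02 : t0 ≠ t2) (ht12 : t1 ≠ t2)
    (hs01 : s0 ≠ s1) (hs02 : s0 ≠ s2) (hs12 : s1 ≠ s2)
    (h0 : 2*s0 = t0+t1 ∨ 2*s0 = t0+t2 ∨ 2*s0 = t1+t2)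
    (h1 : 2*s1 = t0+t1 ∨ 2*s1 = t0+t2 ∨ 2*s1 = t1+t2)
    (h2 : 2*s2 = t0+t1 ∨ 2*s2 = t0+t2 ∨ 2*s2 = t1+t2)
    (h3 : 2*t0 = s0+s1 ∨ 2*t0 = s0+s2 ∨ 2*t0 = s1+s2)
    (h4 : 2*t1 = s0+s1 ∨ 2*t1 = s0+s2 ∨ 2*t1 = s1+s2)
    (h5 : 2*t2 = s0+s1 ∨ 2*t2 = s0+s2 ∨ 2*t2 = s1+s2) : False := by
  rcases h0 with h0|h0|h0 <;> rcases h1 with h1|h1|h1 <;> rcases h2 with h2|h2|h2 <;>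
  first
  | exact hs01 (by linarith) | exact hs02 (by linarith) | exact hs12 (by linarith)
  | (rcases h3 with h3|h3|h3 <;>
     first
     | exact ht01 (by linarith) | exact ht02 (by linarith) | exact ht12 (by linarith)
     | (rcases h4 with h4|h4|h4 <;>
        first
        | exact ht01 (by linarith) | exact ht02 (by linarith) | exact ht12 (by linarith)
        | (rcases h5 with h5|h5|h5 <;>
           first
           | exact ht01 (by linarith) | exact ht02 (by linarith) | exact ht12 (by linarith)
           | exact hs01 (by linarith) | exact hs02 (by linarith) | exact hs12 (by linarith))))

/-- Impossibility in the distribution 3+2 case of Theorem 2: two families of three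
equal-radius circles with collinear centers on parallel lines cannot be pairwise tangent
across the families. -/
theorem no_three_plus_three_parallel_tangent_families :
    ¬ ∃ (u : Plane) (ρ σ : ℝ) (x y : Fin 3 → Plane),
      u ≠ 0 ∧ 0 < ρ ∧ 0 < σ ∧
      Function.Injective x ∧ Function.Injective y ∧
      (∀ i, ∃ c : ℝ, x i - x 0 = c • u) ∧
      (∀ j, ∃ c : ℝ, y j - y 0 = c • u) ∧
      (∀ i j, Tangent (x i, ρ) (y j, σ)) := by
  rintro ⟨u, ρ, σ, x, y, hu, hρ, hσ, hxinj, hyinj, hx, hy, htan⟩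
  choose a ha using hx
  choose b hb using hy
  have hu' : ‖u‖ ≠ 0 := norm_ne_zero_iff.mpr hu
  have hu2 : ‖u‖ ^ 2 ≠ 0 := pow_ne_zero _ hu'
  set v : Plane := x 0 - y 0 with hv
  set c : ℝ := ⟪u, v⟫ / ‖u‖ ^ 2 with hc
  set w : Plane := v - c • u with hwdef
  have hw : ⟪u, w⟫ = 0 := by
    simp only [hwdef, inner_sub_right, real_inner_smul_right,
      real_inner_self_eq_norm_sq, hc]
    field_simp
    ring
  have hnorm : ∀ r : ℝ, ‖w + r • u‖ ^ 2 = ‖w‖ ^ 2 + r ^ 2 * ‖u‖ ^ 2 := by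
    intro r
    have h0 : ⟪w, r • u⟫ = 0 := by
      rw [real_inner_smul_right, real_inner_comm, hw, mul_zero]
    rw [norm_add_sq_real, h0, norm_smul]
    simp [mul_pow, sq_abs]
  set t : Fin 3 → ℝ := fun i => (c + a i) * ‖u‖ with htdef
  set s : Fin 3 → ℝ := fun j => b j * ‖u‖ with hsdef
  have hdist : ∀ i j, (dist (x i) (y j)) ^ 2 = ‖w‖ ^ 2 + (t i - s j) ^ 2 := by
    intro i j
    have hx' : x i - y j = w + ((c + a i) - b j) • u := by
      have h1 := ha i
      have h2 := hb j
      have h3 : x i - y j = (x i - x 0) - (y j - y 0) + v := by rw [hv]; abel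
      rw [h3, h1, h2, hwdef]
      rw [sub_smul, add_smul]
      abel
    rw [dist_eq_norm, hx', hnorm _]
    have : t i - s j = ((c + a i) - b j) * ‖u‖ := by simp only [htdef, hsdef]; ring
    rw [this]
    ring
  have hxi : ∀ i, x i = a i • u + x 0 := fun i => by
    rw [← ha i]; abel
  have hyj : ∀ j, y j = b j • u + y 0 := fun j => by
    rw [← hb j]; abel
  have htinj : Function.Injective t := by
    intro i i' h
    have h' : c + a i = c + a i' := mul_right_cancel₀ hu' h
    have h'' : a i = a i' := by linarith
    apply hxinj
    rw [hxi i, hxi i', h'']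
  have hsinj : Function.Injective s := by
    intro j j' h
    have h'' : b j = b j' := mul_right_cancel₀ hu' h
    apply hyinj
    rw [hyj j, hyj j', h'']
  set P : ℝ := (ρ + σ) ^ 2 - ‖w‖ ^ 2 with hP
  set Q : ℝ := (ρ - σ) ^ 2 - ‖w‖ ^ 2 with hQ
  have hsq : ∀ i j, (t i - s j) ^ 2 = P ∨ (t i - s j) ^ 2 = Q := by
    intro i j
    have h := (htan i j).2
    simp only at h
    have hd := hdist i j
    rcases h with h | h
    · left
      rw [h] at hd
      rw [hP]; linarith
    · right
      rw [h, sq_abs] at hd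
      rw [hQ]; linarith
  have tne : ∀ i i' : Fin 3, i ≠ i' → t i ≠ t i' := fun i i' h hh => h (htinj hh)
  have sne : ∀ j j' : Fin 3, j ≠ j' → s j ≠ s j' := fun j j' h hh => h (hsinj hh)
  have hcol : ∀ j, 2 * s j = t 0 + t 1 ∨ 2 * s j = t 0 + t 2 ∨ 2 * s j = t 1 + t 2 := by
    intro j
    have d01 : t 0 - s j ≠ t 1 - s j := by
      simpa [sub_left_inj] using tne 0 1 (by decide)
    have d02 : t 0 - s j ≠ t 2 - s j := by
      simpa [sub_left_inj] using tne 0 2 (by decide)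
    have d12 : t 1 - s j ≠ t 2 - s j := by
      simpa [sub_left_inj] using tne 1 2 (by decide)
    rcases col _ _ _ P Q d01 d02 d12 (hsq 0 j) (hsq 1 j) (hsq 2 j) with h | h | h
    · left; linarith
    · right; left; linarith
    · right; right; linarith
  have hrow : ∀ i, 2 * t i = s 0 + s 1 ∨ 2 * t i = s 0 + s 2 ∨ 2 * t i = s 1 + s 2 := by
    intro i
    have d01 : t i - s 0 ≠ t i - s 1 := by
      simpa [sub_right_inj] using sne 0 1 (by decide)
    have d02 : t i - s 0 ≠ t i - s 2 := by
      simpa [sub_right_inj] using sne 0 2 (by decide)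
    have d12 : t i - s 1 ≠ t i - s 2 := by
      simpa [sub_right_inj] using sne 1 2 (by decide)
    rcases col _ _ _ P Q d01 d02 d12 (hsq i 0) (hsq i 1) (hsq i 2) with h | h | h
    · left; linarith
    · right; left; linarith
    · right; right; linarith
  exact key (t 0) (t 1) (t 2) (s 0) (s 1) (s 2)
    (tne 0 1 (by decide)) (tne 0 2 (by decide)) (tne 1 2 (by decide))
    (sne 0 1 (by decide)) (sne 0 2 (by decide)) (sne 1 2 (by decide))
    (hcol 0) (hcol 1) (hcol 2) (hrow 0) (hrow 1) (hrow 2)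
end
end

section
/- For every function f : Fin 3 → Fin 6 → Bool there exist indices i, j ∈ Fin 3 with i ≠ j and a value v : Bool such that at least 4 of the columns c ∈ Fin 6 satisfy xor (f i c) (f j c) = v. (Equivalently: in any 3×6 table of signs one can choose 2 rows and 4 columns so that in each chosen column the pair of signs in the chosen rows is the same up to simultaneously flipping both signs.) -/
lemma aux : ∀ a b : Fin 6 → Bool,
    (∃ v, 4 ≤ (Finset.univ.filter fun c : Fin 6 => a c = v).card) ∨
    (∃ v, 4 ≤ (Finset.univ.filter fun c : Fin 6 => b c = v).card) ∨
    (∃ v, 4 ≤ (Finset.univ.filter fun c : Fin 6 => xor (a c) (b c) = v).card) := by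
  set_option maxRecDepth 100000 in
  decide

/-- Lemma 14 (sign-table lemma): in any 3 × 6 table of Boolean signs one can choose two
rows and a value so that at least four columns have the prescribed xor of the two rows. -/
theorem sign_table_lemma (f : Fin 3 → Fin 6 → Bool) :
    ∃ i j : Fin 3, i ≠ j ∧ ∃ v : Bool,
      4 ≤ (Finset.univ.filter fun c : Fin 6 => xor (f i c) (f j c) = v).card := by
  rcases aux (fun c => xor (f 0 c) (f 1 c)) (fun c => xor (f 0 c) (f 2 c)) with h | h | h
  · exact ⟨0, 1, by decide, h⟩
  · exact ⟨0, 2, by decide, h⟩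
  · refine ⟨1, 2, by decide, ?_⟩
    have h2 : ∀ c : Fin 6, xor (xor (f 0 c) (f 1 c)) (xor (f 0 c) (f 2 c)) =
        xor (f 1 c) (f 2 c) := by
      intro c; cases f 0 c <;> cases f 1 c <;> cases f 2 c <;> rfl
    simpa only [h2] using h
end

section
/- There do not exist five pairwise tangent circles in the plane such that no point of the plane lies on three of them. (The complete graph K₅ is not realizable by a nondegenerate family of tangent circles.) -/
noncomputable section

lemma perk (r0 r1 t rk σk τk Wk Xk Dk : ℝ)
    (hrk : 0 < rk) (ht : t ≠ 0)
    (hs2 : (t - r0)^2 = r1^2)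
    (hσk : σk = 1 ∨ σk = -1) (hτk : τk = 1 ∨ τk = -1)
    (h0 : Dk + 2*r0*Wk + r0^2*t^2 = t^2*(rk + σk*r0)^2)
    (h1 : Dk - 2*(t - r0)*Wk + (t - r0)^2*t^2 = t^2*(rk + τk*r1)^2)
    (hek : Dk - t^2*rk^2 ≠ 0)
    (hlag : Wk^2 + Xk^2 = Dk*t^2) :
    τk*r1 = σk*(t - r0) ∧ Wk = t*σk*rk*(2*r0 - t) ∧
      Xk^2 = 4*r0*(t - r0)*rk*(rk + σk*t)*t^2 := by
  have hσk2 : σk^2 = 1 := by rcases hσk with rfl | rfl <;> norm_num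
  have hτk2 : τk^2 = 1 := by rcases hτk with rfl | rfl <;> norm_num
  have hW' : (2*t)*Wk = (2*t)*(t*rk*(σk*r0 - τk*r1)) := by
    linear_combination h0 - h1 + r0^2*t^2*hσk2 - r1^2*t^2*hτk2 + t^2*hs2
  have hW : Wk = t*rk*(σk*r0 - τk*r1) :=
    mul_left_cancel₀ (mul_ne_zero two_ne_zero ht) hW'
  have he : Dk - t^2*rk^2 = 2*r0*rk*t*(σk*(t - r0) + τk*r1) := by
    linear_combination h0 - 2*r0*hW + r0^2*t^2*hσk2
  have hne : σk*(t - r0) + τk*r1 ≠ 0 := by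
    intro h
    exact hek (by rw [he, h, mul_zero])
  have hz : (σk*(t - r0) - τk*r1) * (σk*(t - r0) + τk*r1) = 0 := by
    linear_combination (t - r0)^2*hσk2 - r1^2*hτk2 + hs2
  have hst : τk*r1 = σk*(t - r0) := by
    rcases mul_eq_zero.mp hz with h | h
    · exact (sub_eq_zero.mp h).symm
    · exact absurd h hne
  have hW2 : Wk = t*σk*rk*(2*r0 - t) := by linear_combination hW - t*rk*hst
  have he2 : Dk - t^2*rk^2 = 4*r0*rk*t*σk*(t - r0) := by
    linear_combination he + 2*r0*rk*t*hst
  have hX : Xk^2 = 4*r0*(t - r0)*rk*(rk + σk*t)*t^2 := by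
    linear_combination hlag + t^2*he2 - (Wk + t*σk*rk*(2*r0 - t))*hW2
      - rk^2*t^2*(2*r0 - t)^2*hσk2
  exact ⟨hst, hW2, hX⟩

lemma pair_id (r0 r1 t rk rl σk σl τk τl σkl Wk Wl Xk Xl : ℝ)
    (hr1 : r1 ≠ 0)
    (hs2 : (t - r0)^2 = r1^2)
    (hσk : σk = 1 ∨ σk = -1) (hσl : σl = 1 ∨ σl = -1) (hσkl : σkl = 1 ∨ σkl = -1)
    (hτk1 : τk = 1 ∨ τk = -1) (hτl1 : τl = 1 ∨ τl = -1)
    (hτk : τk*r1 = σk*(t - r0)) (hτl : τl*r1 = σl*(t - r0))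
    (hWk : Wk = t*σk*rk*(2*r0 - t)) (hWl : Wl = t*σl*rl*(2*r0 - t))
    (hXk : Xk^2 = 4*r0*(t - r0)*rk*(rk + σk*t)*t^2)
    (hXl : Xl^2 = 4*r0*(t - r0)*rl*(rl + σl*t)*t^2)
    (hpair : (Wk - Wl)^2 + (Xk - Xl)^2 = t^4*(rk + σkl*rl)^2) :
    (τk*Xk*rl - τl*Xl*rk)^2 = 2*t^4*rk^2*rl^2*(1 + σk*σl*σkl) := by
  have hτk2 : τk^2 = 1 := by rcases hτk1 with rfl | rfl <;> norm_num
  have hτl2 : τl^2 = 1 := by rcases hτl1 with rfl | rfl <;> norm_num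
  have hττ : τk*τl = σk*σl := by
    have h : (τk*τl - σk*σl)*r1^2 = 0 := by
      linear_combination (τl*r1)*hτk + (σk*(t - r0))*hτl + σk*σl*hs2
    rcases mul_eq_zero.mp h with h' | h'
    · linarith [sub_eq_zero.mp h']
    · exact absurd h' (pow_ne_zero 2 hr1)
  have hΔW : (Wk - Wl)^2 = t^2*(2*r0 - t)^2*(σk*rk - σl*rl)^2 := by
    rw [hWk, hWl]; ring
  rcases hσk with rfl | rfl <;> rcases hσl with rfl | rfl <;> rcases hσkl with rfl | rfl <;>
    first
      | linear_combination (rl^2*Xk^2)*hτk2 + (rk^2*Xl^2)*hτl2 - 2*rk*rl*Xk*Xl*hττ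
          + (rl^2 - rk*rl)*hXk + (rk^2 - rk*rl)*hXl + rk*rl*hpair - rk*rl*hΔW
      | linear_combination (rl^2*Xk^2)*hτk2 + (rk^2*Xl^2)*hτl2 - 2*rk*rl*Xk*Xl*hττ
          + (rl^2 + rk*rl)*hXk + (rk^2 + rk*rl)*hXl - rk*rl*hpair + rk*rl*hΔW

lemma deg_case (r0 r1 t rk rl σk σl τk τl Wk Wl Xk Xl u0 u1 w0 w1 : ℝ)
    (hr0 : 0 < r0) (hr1 : 0 < r1) (hrk : 0 < rk) (hrl : 0 < rl) (ht : t ≠ 0)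
    (hs2 : (t - r0)^2 = r1^2)
    (hσk : σk = 1 ∨ σk = -1) (hσl : σl = 1 ∨ σl = -1)
    (hτk1 : τk = 1 ∨ τk = -1) (hτl1 : τl = 1 ∨ τl = -1)
    (hstk : τk*r1 = σk*(t - r0)) (hstl : τl*r1 = σl*(t - r0))
    (hWk : Wk = t*σk*rk*(2*r0 - t)) (hWl : Wl = t*σl*rl*(2*r0 - t))
    (hXk : Xk^2 = 4*r0*(t - r0)*rk*(rk + σk*t)*t^2)
    (hXl : Xl^2 = 4*r0*(t - r0)*rl*(rl + σl*t)*t^2)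
    (hzero : τk*Xk*rl = τl*Xl*rk)
    (hcoord : (Wk - Wl)^2 + (Xk - Xl)^2 = t^4*((u0 - w0)^2 + (u1 - w1)^2)) :
    u0 = w0 ∧ u1 = w1 ∧ rk = rl := by
  have hτk2 : τk^2 = 1 := by rcases hτk1 with rfl | rfl <;> norm_num
  have hτl2 : τl^2 = 1 := by rcases hτl1 with rfl | rfl <;> norm_num
  have hs : t - r0 ≠ 0 := by
    intro h; rw [h] at hs2; nlinarith
  have h2 : (τk*Xk*rl)^2 = (τl*Xl*rk)^2 := by rw [hzero]
  have hsq : Xk^2*rl^2 = Xl^2*rk^2 := by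
    linear_combination h2 - Xk^2*rl^2*hτk2 + Xl^2*rk^2*hτl2
  have h3 : (4*r0*(t - r0)*t^2*rk*rl) * (t*(σk*rl - σl*rk)) = 0 := by
    linear_combination hsq - rl^2*hXk + rk^2*hXl
  have hC : (4*r0*(t - r0)*t^2*rk*rl) ≠ 0 := by
    apply mul_ne_zero; apply mul_ne_zero; apply mul_ne_zero; apply mul_ne_zero
    · positivity
    · exact hs
    · positivity
    · exact hrk.ne'
    · exact hrl.ne'
  have h4 : t*(σk*rl - σl*rk) = 0 := (mul_eq_zero.mp h3).resolve_left hC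
  have h5 : σk*rl = σl*rk := by
    have := (mul_eq_zero.mp h4).resolve_left ht
    linarith [sub_eq_zero.mp this]
  obtain ⟨hσeq, hrkl⟩ : σk = σl ∧ rk = rl := by
    rcases hσk with rfl | rfl <;> rcases hσl with rfl | rfl
    · exact ⟨rfl, by linarith⟩
    · exfalso; linarith
    · exfalso; linarith
    · exact ⟨rfl, by linarith⟩
  have hτeq : τk = τl := by
    have h6 : τk*r1 = τl*r1 := by rw [hstk, hstl, hσeq]
    exact mul_right_cancel₀ hr1.ne' h6
  have hτne : τk ≠ 0 := by rcases hτk1 with rfl | rfl <;> norm_num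
  have hXeq : Xk = Xl := by
    rw [← hτeq, ← hrkl] at hzero
    have h7 : τk*(Xk*rk) = τk*(Xl*rk) := by linear_combination hzero
    have h8 := mul_left_cancel₀ hτne h7
    exact mul_right_cancel₀ hrk.ne' h8
  have hWeq : Wk = Wl := by rw [hWk, hWl, hσeq, hrkl]
  have h9 : t^4*((u0 - w0)^2 + (u1 - w1)^2) = 0 := by
    rw [← hcoord, hWeq, hXeq]; ring
  have ht4 : (t:ℝ)^4 ≠ 0 := pow_ne_zero 4 ht
  have h10 : (u0 - w0)^2 + (u1 - w1)^2 = 0 := (mul_eq_zero.mp h9).resolve_left ht4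
  have e1 : (u0 - w0)^2 = 0 :=
    le_antisymm (by linarith [sq_nonneg (u1 - w1)]) (sq_nonneg _)
  have e2 : (u1 - w1)^2 = 0 :=
    le_antisymm (by linarith [sq_nonneg (u0 - w0)]) (sq_nonneg _)
  refine ⟨?_, ?_, hrkl⟩
  · have := pow_eq_zero_iff (n := 2) (by norm_num) |>.mp e1
    linarith [sub_eq_zero.mp this]
  · have := pow_eq_zero_iff (n := 2) (by norm_num) |>.mp e2
    linarith [sub_eq_zero.mp this]

lemma no_three (a b cc : ℝ) (hc : cc ≠ 0) (ha : a^2 = cc) (hb : b^2 = cc)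
    (hab : (a - b)^2 = cc) : False := by
  have h1 : 2*(a*b) = cc := by linear_combination ha + hb - hab
  have h2 : (2*(a*b))^2 = cc^2 := by rw [h1]
  have h3 : 3*(cc*cc) = 0 := by linear_combination h2 - 4*b^2*ha - 4*cc*hb
  exact hc (mul_self_eq_zero.mp (by linarith))


lemma dist_sq_plane (x y : Plane) :
    dist x y ^ 2 = (x 0 - y 0)^2 + (x 1 - y 1)^2 := by
  rw [EuclideanSpace.dist_eq, Real.sq_sqrt (by positivity)]
  simp [Fin.sum_univ_two, Real.dist_eq, sq_abs]

lemma dist_of_sq {x y : Plane} {r : ℝ} (hr : 0 ≤ r)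
    (h : dist x y ^ 2 = r ^ 2) : dist x y = r := by
  have h1 : (dist x y - r) * (dist x y + r) = 0 := by linear_combination h
  rcases mul_eq_zero.mp h1 with h2 | h2
  · exact sub_eq_zero.mp h2
  · have := dist_nonneg (x := x) (y := y); linarith

lemma tangent_sq {x y : Plane} {a b : ℝ} (h : Tangent (x, a) (y, b)) :
    ∃ σ : ℝ, (σ = 1 ∨ σ = -1) ∧ dist x y ^ 2 = (a + σ * b)^2 := by
  rcases h.2 with h' | h'
  · exact ⟨1, Or.inl rfl, by rw [h']; ring⟩
  · exact ⟨-1, Or.inr rfl, by rw [h', sq_abs]; ring⟩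

set_option maxHeartbeats 1000000 in
/-- K₅ is not realizable by a nondegenerate family of tangent circles: there are no five
pairwise tangent circles such that no point lies on three of them. -/
theorem K5_not_realizable :
    ¬ ∃ (c : Fin 5 → Plane) (r : Fin 5 → ℝ),
      (∀ i, 0 < r i) ∧
      (∀ i j, i ≠ j → Tangent (c i, r i) (c j, r j)) ∧
      ¬ ∃ (p : Plane) (i j k : Fin 5), i ≠ j ∧ j ≠ k ∧ i ≠ k ∧
        dist p (c i) = r i ∧ dist p (c j) = r j ∧ dist p (c k) = r k := by
  rintro ⟨c, r, hr, htan, hnd⟩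
  obtain ⟨σ01, hσ01, h01⟩ := tangent_sq (htan 0 1 (by decide))
  set t := r 0 + σ01 * r 1 with htdef
  have ht : t ≠ 0 := by
    intro h0
    have hd2 : dist (c 0) (c 1) ^ 2 = 0 := by rw [h01, h0]; ring
    have hd : dist (c 0) (c 1) = 0 := pow_eq_zero_iff two_ne_zero |>.mp hd2
    have hceq : c 0 = c 1 := dist_eq_zero.mp hd
    rw [htdef] at h0
    rcases hσ01 with h | h
    · rw [h] at h0; linarith [hr 0, hr 1]
    · rw [h] at h0
      have hreq : r 0 = r 1 := by linarith
      exact (htan 0 1 (by decide)).1 (by rw [hceq, hreq])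
  have hs2 : (t - r 0)^2 = (r 1)^2 := by
    rcases hσ01 with h | h <;> rw [htdef, h] <;> ring
  clear_value t
  set vx := c 1 0 - c 0 0 with hvxd
  set vy := c 1 1 - c 0 1 with hvyd
  have hv : vx^2 + vy^2 = t^2 := by
    have hd := dist_sq_plane (c 0) (c 1)
    rw [hvxd, hvyd]
    linear_combination h01 - hd
  clear_value vx vy
  set p : Plane := pt (c 0 0 + r 0/t*vx) (c 0 1 + r 0/t*vy) with hpd
  have hp0 : dist p (c 0) = r 0 := by
    apply dist_of_sq (hr 0).le
    rw [dist_sq_plane]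
    show (c 0 0 + r 0/t*vx - c 0 0)^2 + (c 0 1 + r 0/t*vy - c 0 1)^2 = (r 0)^2
    field_simp
    linear_combination (r 0)^2 * hv
  have hp1 : dist p (c 1) = r 1 := by
    apply dist_of_sq (hr 1).le
    rw [dist_sq_plane]
    show (c 0 0 + r 0/t*vx - c 1 0)^2 + (c 0 1 + r 0/t*vy - c 1 1)^2 = (r 1)^2
    field_simp
    linear_combination (t - r 0)^2*hv + t^2*hs2
      + (2*t*(r 0 - t)*vx + t^2*(vx - c 1 0 + c 0 0))*hvxd
      + (2*t*(r 0 - t)*vy + t^2*(vy - c 1 1 + c 0 1))*hvyd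
  have hek : ∀ k : Fin 5, k ≠ 0 → k ≠ 1 → dist p (c k) ≠ r k := by
    intro k h0 h1 hk
    exact hnd ⟨p, 0, 1, k, by decide, Ne.symm h1, Ne.symm h0, hp0, hp1, hk⟩
  -- circle 2
  set A2 := t*(c 2 0 - c 0 0) - r 0*vx with hA2
  set B2 := t*(c 2 1 - c 0 1) - r 0*vy with hB2
  set W2 := A2*vx + B2*vy with hW2d
  set X2 := -A2*vy + B2*vx with hX2d
  set D2 := A2^2 + B2^2 with hD2d
  clear_value A2 B2 W2 X2 D2
  obtain ⟨σ2, hσ2, h20⟩ := tangent_sq (htan 2 0 (by decide))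
  obtain ⟨τ2, hτ2, h21⟩ := tangent_sq (htan 2 1 (by decide))
  rw [dist_sq_plane] at h20 h21
  have H20 : D2 + 2*(r 0)*W2 + (r 0)^2*t^2 = t^2*(r 2 + σ2*(r 0))^2 := by
    rw [hD2d, hW2d, hA2, hB2]
    linear_combination t^2*h20 - (r 0)^2*hv
  have H21 : D2 - 2*(t - r 0)*W2 + (t - r 0)^2*t^2 = t^2*(r 2 + τ2*(r 1))^2 := by
    rw [hD2d, hW2d, hA2, hB2]
    linear_combination t^2*h21 - (t - r 0)^2*hv
      + (t^2*(vx + c 0 0 + c 1 0 - 2*(c 2 0)))*hvxd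
      + (t^2*(vy + c 0 1 + c 1 1 - 2*(c 2 1)))*hvyd
  have Hlag2 : W2^2 + X2^2 = D2*t^2 := by
    rw [hD2d, hW2d, hX2d, hA2, hB2]
    linear_combination ((t*(c 2 0 - c 0 0) - r 0*vx)^2 + (t*(c 2 1 - c 0 1) - r 0*vy)^2) * hv
  have Hek2 : D2 - t^2*(r 2)^2 ≠ 0 := by
    intro hcontra
    rw [hD2d, hA2, hB2] at hcontra
    apply hek 2 (by decide) (by decide)
    apply dist_of_sq (hr 2).le
    rw [dist_sq_plane]
    show (c 0 0 + r 0/t*vx - c 2 0)^2 + (c 0 1 + r 0/t*vy - c 2 1)^2 = (r 2)^2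
    field_simp
    linear_combination hcontra
  obtain ⟨hst2, hWf2, hXf2⟩ := perk (r 0) (r 1) t (r 2) σ2 τ2 W2 X2 D2
    (hr 2) ht hs2 hσ2 hτ2 H20 H21 Hek2 Hlag2
  -- circle 3
  set A3 := t*(c 3 0 - c 0 0) - r 0*vx with hA3
  set B3 := t*(c 3 1 - c 0 1) - r 0*vy with hB3
  set W3 := A3*vx + B3*vy with hW3d
  set X3 := -A3*vy + B3*vx with hX3d
  set D3 := A3^2 + B3^2 with hD3d
  clear_value A3 B3 W3 X3 D3
  obtain ⟨σ3, hσ3, h30⟩ := tangent_sq (htan 3 0 (by decide))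
  obtain ⟨τ3, hτ3, h31⟩ := tangent_sq (htan 3 1 (by decide))
  rw [dist_sq_plane] at h30 h31
  have H30 : D3 + 2*(r 0)*W3 + (r 0)^2*t^2 = t^2*(r 3 + σ3*(r 0))^2 := by
    rw [hD3d, hW3d, hA3, hB3]
    linear_combination t^2*h30 - (r 0)^2*hv
  have H31 : D3 - 2*(t - r 0)*W3 + (t - r 0)^2*t^2 = t^2*(r 3 + τ3*(r 1))^2 := by
    rw [hD3d, hW3d, hA3, hB3]
    linear_combination t^2*h31 - (t - r 0)^2*hv
      + (t^2*(vx + c 0 0 + c 1 0 - 2*(c 3 0)))*hvxd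
      + (t^2*(vy + c 0 1 + c 1 1 - 2*(c 3 1)))*hvyd
  have Hlag3 : W3^2 + X3^2 = D3*t^2 := by
    rw [hD3d, hW3d, hX3d, hA3, hB3]
    linear_combination ((t*(c 3 0 - c 0 0) - r 0*vx)^2 + (t*(c 3 1 - c 0 1) - r 0*vy)^2) * hv
  have Hek3 : D3 - t^2*(r 3)^2 ≠ 0 := by
    intro hcontra
    rw [hD3d, hA3, hB3] at hcontra
    apply hek 3 (by decide) (by decide)
    apply dist_of_sq (hr 3).le
    rw [dist_sq_plane]
    show (c 0 0 + r 0/t*vx - c 3 0)^2 + (c 0 1 + r 0/t*vy - c 3 1)^2 = (r 3)^2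
    field_simp
    linear_combination hcontra
  obtain ⟨hst3, hWf3, hXf3⟩ := perk (r 0) (r 1) t (r 3) σ3 τ3 W3 X3 D3
    (hr 3) ht hs2 hσ3 hτ3 H30 H31 Hek3 Hlag3
  -- circle 4
  set A4 := t*(c 4 0 - c 0 0) - r 0*vx with hA4
  set B4 := t*(c 4 1 - c 0 1) - r 0*vy with hB4
  set W4 := A4*vx + B4*vy with hW4d
  set X4 := -A4*vy + B4*vx with hX4d
  set D4 := A4^2 + B4^2 with hD4d
  clear_value A4 B4 W4 X4 D4
  obtain ⟨σ4, hσ4, h40⟩ := tangent_sq (htan 4 0 (by decide))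
  obtain ⟨τ4, hτ4, h41⟩ := tangent_sq (htan 4 1 (by decide))
  rw [dist_sq_plane] at h40 h41
  have H40 : D4 + 2*(r 0)*W4 + (r 0)^2*t^2 = t^2*(r 4 + σ4*(r 0))^2 := by
    rw [hD4d, hW4d, hA4, hB4]
    linear_combination t^2*h40 - (r 0)^2*hv
  have H41 : D4 - 2*(t - r 0)*W4 + (t - r 0)^2*t^2 = t^2*(r 4 + τ4*(r 1))^2 := by
    rw [hD4d, hW4d, hA4, hB4]
    linear_combination t^2*h41 - (t - r 0)^2*hv
      + (t^2*(vx + c 0 0 + c 1 0 - 2*(c 4 0)))*hvxd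
      + (t^2*(vy + c 0 1 + c 1 1 - 2*(c 4 1)))*hvyd
  have Hlag4 : W4^2 + X4^2 = D4*t^2 := by
    rw [hD4d, hW4d, hX4d, hA4, hB4]
    linear_combination ((t*(c 4 0 - c 0 0) - r 0*vx)^2 + (t*(c 4 1 - c 0 1) - r 0*vy)^2) * hv
  have Hek4 : D4 - t^2*(r 4)^2 ≠ 0 := by
    intro hcontra
    rw [hD4d, hA4, hB4] at hcontra
    apply hek 4 (by decide) (by decide)
    apply dist_of_sq (hr 4).le
    rw [dist_sq_plane]
    show (c 0 0 + r 0/t*vx - c 4 0)^2 + (c 0 1 + r 0/t*vy - c 4 1)^2 = (r 4)^2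
    field_simp
    linear_combination hcontra
  obtain ⟨hst4, hWf4, hXf4⟩ := perk (r 0) (r 1) t (r 4) σ4 τ4 W4 X4 D4
    (hr 4) ht hs2 hσ4 hτ4 H40 H41 Hek4 Hlag4
  -- pair 2,3
  obtain ⟨σ23, hσ23, h23⟩ := tangent_sq (htan 2 3 (by decide))
  rw [dist_sq_plane] at h23
  have Hp23 : (W2 - W3)^2 + (X2 - X3)^2 = t^4*(r 2 + σ23*(r 3))^2 := by
    rw [hW2d, hX2d, hW3d, hX3d, hA2, hB2, hA3, hB3]
    linear_combination (t^2*((c 2 0 - c 3 0)^2 + (c 2 1 - c 3 1)^2))*hv + t^4*h23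
  have R23 := pair_id (r 0) (r 1) t (r 2) (r 3) σ2 σ3 τ2 τ3 σ23 W2 W3 X2 X3
    (hr 1).ne' hs2 hσ2 hσ3 hσ23 hτ2 hτ3 hst2 hst3 hWf2 hWf3 hXf2 hXf3 Hp23
  have hcase23 : 1 + σ2*σ3*σ23 = 0 ∨ 1 + σ2*σ3*σ23 = 2 := by
    rcases hσ2 with h | h <;> rcases hσ3 with h' | h' <;> rcases hσ23 with h'' | h'' <;>
      rw [h, h', h''] <;> norm_num
  -- pair 2,4
  obtain ⟨σ24, hσ24, h24⟩ := tangent_sq (htan 2 4 (by decide))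
  rw [dist_sq_plane] at h24
  have Hp24 : (W2 - W4)^2 + (X2 - X4)^2 = t^4*(r 2 + σ24*(r 4))^2 := by
    rw [hW2d, hX2d, hW4d, hX4d, hA2, hB2, hA4, hB4]
    linear_combination (t^2*((c 2 0 - c 4 0)^2 + (c 2 1 - c 4 1)^2))*hv + t^4*h24
  have R24 := pair_id (r 0) (r 1) t (r 2) (r 4) σ2 σ4 τ2 τ4 σ24 W2 W4 X2 X4
    (hr 1).ne' hs2 hσ2 hσ4 hσ24 hτ2 hτ4 hst2 hst4 hWf2 hWf4 hXf2 hXf4 Hp24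
  have hcase24 : 1 + σ2*σ4*σ24 = 0 ∨ 1 + σ2*σ4*σ24 = 2 := by
    rcases hσ2 with h | h <;> rcases hσ4 with h' | h' <;> rcases hσ24 with h'' | h'' <;>
      rw [h, h', h''] <;> norm_num
  -- pair 3,4
  obtain ⟨σ34, hσ34, h34⟩ := tangent_sq (htan 3 4 (by decide))
  rw [dist_sq_plane] at h34
  have Hp34 : (W3 - W4)^2 + (X3 - X4)^2 = t^4*(r 3 + σ34*(r 4))^2 := by
    rw [hW3d, hX3d, hW4d, hX4d, hA3, hB3, hA4, hB4]
    linear_combination (t^2*((c 3 0 - c 4 0)^2 + (c 3 1 - c 4 1)^2))*hv + t^4*h34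
  have R34 := pair_id (r 0) (r 1) t (r 3) (r 4) σ3 σ4 τ3 τ4 σ34 W3 W4 X3 X4
    (hr 1).ne' hs2 hσ3 hσ4 hσ34 hτ3 hτ4 hst3 hst4 hWf3 hWf4 hXf3 hXf4 Hp34
  have hcase34 : 1 + σ3*σ4*σ34 = 0 ∨ 1 + σ3*σ4*σ34 = 2 := by
    rcases hσ3 with h | h <;> rcases hσ4 with h' | h' <;> rcases hσ34 with h'' | h'' <;>
      rw [h, h', h''] <;> norm_num
  rcases hcase23 with hdeg | hext23
  · -- degenerate pair 2,3
    have hz23 : τ2*X2*(r 3) = τ3*X3*(r 2) := by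
      have hzz : (τ2*X2*(r 3) - τ3*X3*(r 2))^2 = 0 := by rw [R23, hdeg]; ring
      have := pow_eq_zero_iff (n := 2) (by norm_num) |>.mp hzz
      linarith [sub_eq_zero.mp this]
    have hcoord23 : (W2 - W3)^2 + (X2 - X3)^2
        = t^4*((c 2 0 - c 3 0)^2 + (c 2 1 - c 3 1)^2) := by
      rw [hW2d, hX2d, hW3d, hX3d, hA2, hB2, hA3, hB3]
      linear_combination (t^2*((c 2 0 - c 3 0)^2 + (c 2 1 - c 3 1)^2))*hv
    obtain ⟨hc0, hc1, hrr⟩ := deg_case (r 0) (r 1) t (r 2) (r 3) σ2 σ3 τ2 τ3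
      W2 W3 X2 X3 (c 2 0) (c 2 1) (c 3 0) (c 3 1)
      (hr 0) (hr 1) (hr 2) (hr 3) ht hs2 hσ2 hσ3 hτ2 hτ3 hst2 hst3
      hWf2 hWf3 hXf2 hXf3 hz23 hcoord23
    have hceq : c 2 = c 3 := by
      ext i
      fin_cases i
      · exact hc0
      · exact hc1
    exact (htan 2 3 (by decide)).1 (by rw [hceq, hrr])
  rcases hcase24 with hdeg | hext24
  · -- degenerate pair 2,4
    have hz24 : τ2*X2*(r 4) = τ4*X4*(r 2) := by
      have hzz : (τ2*X2*(r 4) - τ4*X4*(r 2))^2 = 0 := by rw [R24, hdeg]; ring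
      have := pow_eq_zero_iff (n := 2) (by norm_num) |>.mp hzz
      linarith [sub_eq_zero.mp this]
    have hcoord24 : (W2 - W4)^2 + (X2 - X4)^2
        = t^4*((c 2 0 - c 4 0)^2 + (c 2 1 - c 4 1)^2) := by
      rw [hW2d, hX2d, hW4d, hX4d, hA2, hB2, hA4, hB4]
      linear_combination (t^2*((c 2 0 - c 4 0)^2 + (c 2 1 - c 4 1)^2))*hv
    obtain ⟨hc0, hc1, hrr⟩ := deg_case (r 0) (r 1) t (r 2) (r 4) σ2 σ4 τ2 τ4
      W2 W4 X2 X4 (c 2 0) (c 2 1) (c 4 0) (c 4 1)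
      (hr 0) (hr 1) (hr 2) (hr 4) ht hs2 hσ2 hσ4 hτ2 hτ4 hst2 hst4
      hWf2 hWf4 hXf2 hXf4 hz24 hcoord24
    have hceq : c 2 = c 4 := by
      ext i
      fin_cases i
      · exact hc0
      · exact hc1
    exact (htan 2 4 (by decide)).1 (by rw [hceq, hrr])
  rcases hcase34 with hdeg | hext34
  · -- degenerate pair 3,4
    have hz34 : τ3*X3*(r 4) = τ4*X4*(r 3) := by
      have hzz : (τ3*X3*(r 4) - τ4*X4*(r 3))^2 = 0 := by rw [R34, hdeg]; ring
      have := pow_eq_zero_iff (n := 2) (by norm_num) |>.mp hzz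
      linarith [sub_eq_zero.mp this]
    have hcoord34 : (W3 - W4)^2 + (X3 - X4)^2
        = t^4*((c 3 0 - c 4 0)^2 + (c 3 1 - c 4 1)^2) := by
      rw [hW3d, hX3d, hW4d, hX4d, hA3, hB3, hA4, hB4]
      linear_combination (t^2*((c 3 0 - c 4 0)^2 + (c 3 1 - c 4 1)^2))*hv
    obtain ⟨hc0, hc1, hrr⟩ := deg_case (r 0) (r 1) t (r 3) (r 4) σ3 σ4 τ3 τ4
      W3 W4 X3 X4 (c 3 0) (c 3 1) (c 4 0) (c 4 1)
      (hr 0) (hr 1) (hr 3) (hr 4) ht hs2 hσ3 hσ4 hτ3 hτ4 hst3 hst4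
      hWf3 hWf4 hXf3 hXf4 hz34 hcoord34
    have hceq : c 3 = c 4 := by
      ext i
      fin_cases i
      · exact hc0
      · exact hc1
    exact (htan 3 4 (by decide)).1 (by rw [hceq, hrr])
  have hc : 4*t^4*((r 2)*(r 3)*(r 4))^2 ≠ 0 := by
    apply mul_ne_zero
    · exact mul_ne_zero four_ne_zero (pow_ne_zero 4 ht)
    · exact pow_ne_zero 2 (mul_ne_zero (mul_ne_zero (hr 2).ne' (hr 3).ne') (hr 4).ne')
  have hP : ((τ2*X2*(r 3) - τ3*X3*(r 2))*(r 4))^2 = 4*t^4*((r 2)*(r 3)*(r 4))^2 := by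
    linear_combination (r 4)^2*R23 + 2*t^4*(r 2)^2*(r 3)^2*(r 4)^2*hext23
  have hQ : ((τ2*X2*(r 4) - τ4*X4*(r 2))*(r 3))^2 = 4*t^4*((r 2)*(r 3)*(r 4))^2 := by
    linear_combination (r 3)^2*R24 + 2*t^4*(r 2)^2*(r 4)^2*(r 3)^2*hext24
  have hPQ : ((τ2*X2*(r 3) - τ3*X3*(r 2))*(r 4) - (τ2*X2*(r 4) - τ4*X4*(r 2))*(r 3))^2
      = 4*t^4*((r 2)*(r 3)*(r 4))^2 := by
    linear_combination (r 2)^2*R34 + 2*t^4*(r 3)^2*(r 4)^2*(r 2)^2*hext34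
  exact no_three _ _ _ hc hP hQ hPQ
end
end

section
/- Let α = (a, s) and β = (b, t) be distinct circles each containing the origin strictly inside (dist 0 a < s and dist 0 b < t; 'type I' circles with respect to the coordinate axes). Suppose there exist two distinct reals t₁, t₂ > 0 such that for each i the circle inscribed in the first quadrant with parameter tᵢ (center (tᵢ, tᵢ), radius tᵢ) is tangent to α and tangent to β. Then α and β have a common point in the open first quadrant: there exists z with z₁ > 0, z₂ > 0, dist z a = s and dist z b = t. -/
noncomputable section

lemma pt_apply0 (x y : ℝ) : pt x y 0 = x := rfl
lemma pt_apply1 (x y : ℝ) : pt x y 1 = y := rfl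

lemma dist_pt_left (x y : ℝ) (c : Plane) :
    dist (pt x y) c = Real.sqrt ((x - c 0)^2 + (y - c 1)^2) := by
  rw [EuclideanSpace.dist_eq, Fin.sum_univ_two]
  simp [pt, Real.dist_eq, sq_abs]

lemma dist_zero_pt_left (c : Plane) :
    dist (0 : Plane) c = Real.sqrt ((c 0)^2 + (c 1)^2) := by
  rw [EuclideanSpace.dist_eq, Fin.sum_univ_two]
  simp [Real.dist_eq, sq_abs]

-- two distinct positive roots of u^2 - 2Cu + P with P < 0 impossible
lemma L0 (u v C P : ℝ) (hu : 0 < u) (hv : 0 < v) (hP : P < 0)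
    (e1 : u^2 - 2*u*C + P = 0) (e2 : v^2 - 2*v*C + P = 0) : u = v := by
  have key : (u - v) * (u*v - P) = 0 := by linear_combination v*e1 - u*e2
  have hpos : 0 < u*v - P := by nlinarith
  rcases mul_eq_zero.mp key with h | h
  · linarith [sub_eq_zero.mp h]
  · linarith

-- external at u, internal at v forces v < u
lemma Lord (u v s P A : ℝ) (hu : 0 < u) (hv : 0 < v) (hs : 0 < s) (hP : P < 0)
    (e1 : u^2 - 2*u*(A+s) + P = 0) (e2 : v^2 - 2*v*(A-s) + P = 0) : v < u := by
  have key : (u - v)*P = u*v*(u - v - 4*s) := by linear_combination u*e2 - v*e1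
  nlinarith [mul_pos hu hv, mul_pos (mul_pos hu hv) hs]

lemma process (u s : ℝ) (c : Plane) (hu : 0 < u) (hs : 0 < s)
    (hin : dist (0:Plane) c < s)
    (htan : dist (pt u u) c = u + s ∨ dist (pt u u) c = |u - s|) :
    ((u - c 0)^2 + (u - c 1)^2 = (u+s)^2) ∨
    (((u - c 0)^2 + (u - c 1)^2 = (s-u)^2) ∧ u < s) := by
  have hd : dist (pt u u) c = Real.sqrt ((u - c 0)^2 + (u - c 1)^2) := dist_pt_left u u c
  have hnn : (0:ℝ) ≤ (u - c 0)^2 + (u - c 1)^2 := by positivity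
  have hsq := Real.sq_sqrt hnn
  rcases htan with h | h
  · left
    rw [hd] at h
    rw [← hsq, h]
  · have hus : u < s := by
      by_contra hge
      push_neg at hge
      have habs : |u - s| = u - s := abs_of_nonneg (by linarith)
      have tri := dist_triangle (0:Plane) c (pt u u)
      rw [dist_zero_pt_left (pt u u), pt_apply0, pt_apply1] at tri
      rw [dist_comm c (pt u u), h, habs] at tri
      have hgt : u < Real.sqrt (u^2 + u^2) := by
        nlinarith [Real.sq_sqrt (by positivity : (0:ℝ) ≤ u^2+u^2),
          Real.sqrt_nonneg (u^2+u^2)]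
      linarith
    right
    refine ⟨?_, hus⟩
    have habs : |u - s| = s - u := by rw [abs_of_neg (by linarith)]; ring
    rw [hd, habs] at h
    rw [← hsq, h]

lemma dist_pt_pt (x y x' y' : ℝ) :
    dist (pt x y) (pt x' y') = Real.sqrt ((x - x')^2 + (y - y')^2) := by
  rw [EuclideanSpace.dist_eq, Fin.sum_univ_two]
  simp [pt, Real.dist_eq, sq_abs]


lemma convex_pos (p q l : ℝ) (hp : 0 < p) (hq : 0 < q) (h0 : 0 ≤ l) (h1 : l ≤ 1) :
    0 < (1-l)*p + l*q := by
  rcases le_or_gt l 0 with h | h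
  · have : l = 0 := le_antisymm h h0
    simp [this, hp]
  · nlinarith [mul_nonneg (sub_nonneg.mpr h1) hp.le, mul_pos h hq]

lemma ivt_step (a0 a1 b0 b1 s t p0 p1 q0 q1 : ℝ)
    (hp0 : 0 < p0) (hp1 : 0 < p1) (hq0 : 0 < q0) (hq1 : 0 < q1)
    (hP : a0^2 + a1^2 - s^2 < 0)
    (hpa : (p0-a0)^2 + (p1-a1)^2 = s^2)
    (hqa : (q0-a0)^2 + (q1-a1)^2 = s^2)
    (hpb : t ≤ Real.sqrt ((p0-b0)^2 + (p1-b1)^2))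
    (hqb : Real.sqrt ((q0-b0)^2 + (q1-b1)^2) ≤ t) :
    ∃ x y : ℝ, 0 < x ∧ 0 < y ∧ (x-a0)^2 + (y-a1)^2 = s^2 ∧ (x-b0)^2 + (y-b1)^2 = t^2 := by
  obtain ⟨m0, hm0def⟩ : ∃ f : ℝ → ℝ, ∀ l, f l = (1-l)*p0 + l*q0 := ⟨_, fun _ => rfl⟩
  obtain ⟨m1, hm1def⟩ : ∃ f : ℝ → ℝ, ∀ l, f l = (1-l)*p1 + l*q1 := ⟨_, fun _ => rfl⟩
  obtain ⟨g, hgdef⟩ : ∃ f : ℝ → ℝ, ∀ l, f l = m0 l * a0 + m1 l * a1 := ⟨_, fun _ => rfl⟩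
  obtain ⟨n, hndef⟩ : ∃ f : ℝ → ℝ, ∀ l, f l = (m0 l)^2 + (m1 l)^2 := ⟨_, fun _ => rfl⟩
  obtain ⟨r, hrdef⟩ : ∃ f : ℝ → ℝ, ∀ l,
      f l = (g l + Real.sqrt ((g l)^2 - (a0^2+a1^2-s^2) * n l)) / n l := ⟨_, fun _ => rfl⟩
  obtain ⟨F, hFdef⟩ : ∃ f : ℝ → ℝ, ∀ l,
      f l = Real.sqrt ((r l * m0 l - b0)^2 + (r l * m1 l - b1)^2) := ⟨_, fun _ => rfl⟩
  have hm0pos : ∀ l ∈ Set.Icc (0:ℝ) 1, 0 < m0 l := by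
    rintro l ⟨h0, h1⟩; rw [hm0def]; exact convex_pos _ _ _ hp0 hq0 h0 h1
  have hm1pos : ∀ l ∈ Set.Icc (0:ℝ) 1, 0 < m1 l := by
    rintro l ⟨h0, h1⟩; rw [hm1def]; exact convex_pos _ _ _ hp1 hq1 h0 h1
  have hnpos : ∀ l ∈ Set.Icc (0:ℝ) 1, 0 < n l := by
    intro l hl
    have h := hm0pos l hl
    rw [hndef]
    nlinarith [sq_nonneg (m1 l)]
  have hdisc : ∀ l ∈ Set.Icc (0:ℝ) 1, 0 < (g l)^2 - (a0^2+a1^2-s^2) * n l := by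
    intro l hl
    nlinarith [sq_nonneg (g l), mul_pos (neg_pos.mpr hP) (hnpos l hl)]
  have hrn : ∀ l ∈ Set.Icc (0:ℝ) 1,
      r l * n l = g l + Real.sqrt ((g l)^2 - (a0^2+a1^2-s^2) * n l) := by
    intro l hl
    rw [hrdef, div_mul_cancel₀ _ (hnpos l hl).ne']
  have hrpos : ∀ l ∈ Set.Icc (0:ℝ) 1, 0 < r l := by
    intro l hl
    have h1 : Real.sqrt ((g l)^2) < Real.sqrt ((g l)^2 - (a0^2+a1^2-s^2) * n l) :=
      Real.sqrt_lt_sqrt (sq_nonneg _) (by nlinarith [mul_pos (neg_pos.mpr hP) (hnpos l hl)])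
    rw [Real.sqrt_sq_eq_abs] at h1
    have h2 : 0 < g l + Real.sqrt ((g l)^2 - (a0^2+a1^2-s^2) * n l) := by
      have := neg_abs_le (g l); linarith
    rw [hrdef]
    exact div_pos h2 (hnpos l hl)
  have hquad : ∀ l ∈ Set.Icc (0:ℝ) 1,
      (r l)^2 * n l - 2 * (r l) * (g l) + (a0^2+a1^2-s^2) = 0 := by
    intro l hl
    have hn := hnpos l hl
    have hS2 : (Real.sqrt ((g l)^2 - (a0^2+a1^2-s^2) * n l))^2
        = (g l)^2 - (a0^2+a1^2-s^2) * n l := Real.sq_sqrt (hdisc l hl).le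
    have h1 := hrn l hl
    have key : n l * ((r l)^2 * n l - 2 * (r l) * (g l) + (a0^2+a1^2-s^2)) = 0 := by
      linear_combination (r l * n l - g l + Real.sqrt ((g l)^2 - (a0^2+a1^2-s^2) * n l)) * h1
        + hS2
    exact (mul_eq_zero.mp key).resolve_left hn.ne'
  have hm00 : m0 0 = p0 := by rw [hm0def]; ring
  have hm10 : m1 0 = p1 := by rw [hm1def]; ring
  have hm01 : m0 1 = q0 := by rw [hm0def]; ring
  have hm11 : m1 1 = q1 := by rw [hm1def]; ring
  have hr_one : ∀ c0 c1 : ℝ, ∀ l : ℝ, 0 < c0 → m0 l = c0 → m1 l = c1 →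
      (c0-a0)^2 + (c1-a1)^2 = s^2 → r l = 1 := by
    intro c0 c1 l hc0 h0 h1 hon
    have hnval := hndef l
    have hgval := hgdef l
    rw [h0, h1] at hnval hgval
    have honq : n l - 2 * g l + (a0^2+a1^2-s^2) = 0 := by
      rw [hnval, hgval]; linear_combination hon
    have hng : 0 < n l - g l := by
      linarith [honq, hnval, sq_nonneg c0, sq_nonneg c1, hP]
    have hnl : 0 < n l := by nlinarith [hnval, hc0, sq_nonneg c1]
    have hd : (g l)^2 - (a0^2+a1^2-s^2) * n l = (n l - g l)^2 := by
      linear_combination (- n l) * honq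
    rw [hrdef, hd, Real.sqrt_sq hng.le]
    field_simp
    ring
  have hr0 : r 0 = 1 := hr_one p0 p1 0 hp0 hm00 hm10 hpa
  have hr1 : r 1 = 1 := hr_one q0 q1 1 hq0 hm01 hm11 hqa
  have hF0 : F 0 = Real.sqrt ((p0-b0)^2 + (p1-b1)^2) := by
    rw [hFdef, hr0, hm00, hm10]; ring_nf
  have hF1 : F 1 = Real.sqrt ((q0-b0)^2 + (q1-b1)^2) := by
    rw [hFdef, hr1, hm01, hm11]; ring_nf
  have hm0c : Continuous m0 := by
    rw [funext hm0def]
    exact ((continuous_const.sub continuous_id).mul continuous_const).add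
      (continuous_id.mul continuous_const)
  have hm1c : Continuous m1 := by
    rw [funext hm1def]
    exact ((continuous_const.sub continuous_id).mul continuous_const).add
      (continuous_id.mul continuous_const)
  have hgc : Continuous g := by
    rw [funext hgdef]; exact (hm0c.mul continuous_const).add (hm1c.mul continuous_const)
  have hnc : Continuous n := by
    rw [funext hndef]; exact (hm0c.pow 2).add (hm1c.pow 2)
  have hrc : ContinuousOn r (Set.Icc 0 1) := by
    rw [funext hrdef]
    apply ContinuousOn.div
    · exact (hgc.add ((((hgc.pow 2).sub (continuous_const.mul hnc))).sqrt)).continuousOn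
    · exact hnc.continuousOn
    · intro l hl; exact (hnpos l hl).ne'
  have hFc : ContinuousOn F (Set.Icc 0 1) := by
    rw [funext hFdef]
    apply ContinuousOn.sqrt
    exact (((hrc.mul hm0c.continuousOn).sub continuousOn_const).pow 2).add
      (((hrc.mul hm1c.continuousOn).sub continuousOn_const).pow 2)
  have hsub := intermediate_value_Icc' (by norm_num : (0:ℝ) ≤ 1) hFc
  have hmem : t ∈ Set.Icc (F 1) (F 0) := ⟨by rw [hF1]; exact hqb, by rw [hF0]; exact hpb⟩
  obtain ⟨l, hl, hFl⟩ := hsub hmem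
  refine ⟨r l * m0 l, r l * m1 l, mul_pos (hrpos l hl) (hm0pos l hl),
    mul_pos (hrpos l hl) (hm1pos l hl), ?_, ?_⟩
  · have hq := hquad l hl
    rw [hndef, hgdef] at hq
    linear_combination hq
  · have hFl' : Real.sqrt ((r l * m0 l - b0)^2 + (r l * m1 l - b1)^2) = t := by
      rw [← hFdef]; exact hFl
    have hnn : (0:ℝ) ≤ (r l * m0 l - b0)^2 + (r l * m1 l - b1)^2 := by positivity
    have h2 := Real.sq_sqrt hnn
    rw [hFl'] at h2
    linarith [h2]

set_option maxHeartbeats 2000000 in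
lemma main_scalar (a0 a1 b0 b1 s t u v : ℝ)
    (hs : 0 < s) (ht : 0 < t) (hu : 0 < u) (hv : 0 < v)
    (hvs : v < s) (hvt : v < t)
    (hPa : a0^2 + a1^2 - s^2 < 0)
    (eau : (u-a0)^2 + (u-a1)^2 = (u+s)^2)
    (eav : (v-a0)^2 + (v-a1)^2 = (s-v)^2)
    (ebu : (u-b0)^2 + (u-b1)^2 = (u+t)^2)
    (ebv : (v-b0)^2 + (v-b1)^2 = (t-v)^2) :
    ∃ x y : ℝ, 0 < x ∧ 0 < y ∧ (x-a0)^2 + (y-a1)^2 = s^2 ∧ (x-b0)^2 + (y-b1)^2 = t^2 := by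
  have ha0l : -s < a0 := by nlinarith [sq_nonneg a1]
  have ha0r : a0 < s := by nlinarith [sq_nonneg a1]
  have ha1l : -s < a1 := by nlinarith [sq_nonneg a0]
  have ha1r : a1 < s := by nlinarith [sq_nonneg a0]
  have hus : (0:ℝ) < u + s := by linarith
  have hsv : (0:ℝ) < s - v := by linarith
  obtain ⟨p0, hp0def⟩ : ∃ x : ℝ, x = u*(s+a0)/(u+s) := ⟨_, rfl⟩
  obtain ⟨p1, hp1def⟩ : ∃ x : ℝ, x = u*(s+a1)/(u+s) := ⟨_, rfl⟩
  obtain ⟨q0, hq0def⟩ : ∃ x : ℝ, x = v*(s-a0)/(s-v) := ⟨_, rfl⟩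
  obtain ⟨q1, hq1def⟩ : ∃ x : ℝ, x = v*(s-a1)/(s-v) := ⟨_, rfl⟩
  have hp0pos : 0 < p0 := hp0def ▸ div_pos (mul_pos hu (by linarith)) hus
  have hp1pos : 0 < p1 := hp1def ▸ div_pos (mul_pos hu (by linarith)) hus
  have hq0pos : 0 < q0 := hq0def ▸ div_pos (mul_pos hv (by linarith)) hsv
  have hq1pos : 0 < q1 := hq1def ▸ div_pos (mul_pos hv (by linarith)) hsv
  have hpa : (p0-a0)^2 + (p1-a1)^2 = s^2 := by
    rw [hp0def, hp1def]; field_simp; linear_combination s^2 * eau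
  have hqa : (q0-a0)^2 + (q1-a1)^2 = s^2 := by
    rw [hq0def, hq1def]; field_simp; linear_combination s^2 * eav
  have hpcd : (u-p0)^2 + (u-p1)^2 = u^2 := by
    rw [hp0def, hp1def]; field_simp; linear_combination eau
  have hqcd : (q0-v)^2 + (q1-v)^2 = v^2 := by
    rw [hq0def, hq1def]; field_simp; linear_combination eav
  have hpb : t ≤ Real.sqrt ((p0-b0)^2 + (p1-b1)^2) := by
    have h1 : Real.sqrt ((u-b0)^2 + (u-b1)^2) = u + t := by
      rw [ebu]; exact Real.sqrt_sq (by linarith)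
    have h2 : Real.sqrt ((u-p0)^2 + (u-p1)^2) = u := by
      rw [hpcd]; exact Real.sqrt_sq hu.le
    have tri := dist_triangle (pt u u) (pt p0 p1) (pt b0 b1)
    rw [dist_pt_pt, dist_pt_pt, dist_pt_pt] at tri
    linarith [tri, h1, h2]
  have hqb : Real.sqrt ((q0-b0)^2 + (q1-b1)^2) ≤ t := by
    have h3 : Real.sqrt ((q0-v)^2 + (q1-v)^2) = v := by
      rw [hqcd]; exact Real.sqrt_sq hv.le
    have h4 : Real.sqrt ((v-b0)^2 + (v-b1)^2) = t - v := by
      rw [ebv]; exact Real.sqrt_sq (by linarith)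
    have tri := dist_triangle (pt q0 q1) (pt v v) (pt b0 b1)
    rw [dist_pt_pt, dist_pt_pt, dist_pt_pt] at tri
    linarith [tri, h3, h4]
  exact ivt_step a0 a1 b0 b1 s t p0 p1 q0 q1 hp0pos hp1pos hq0pos hq1pos hPa hpa hqa hpb hqb


set_option maxHeartbeats 1000000 in
/-- Lemma 5: if two distinct type-I circles have two common tangent circles inscribed in
the first quadrant, then they have a common point in the open first quadrant. -/
theorem two_common_inscribed_solutions_intersect
    (a b : Plane) (s t : ℝ) (hs : 0 < s) (ht : 0 < t)
    (hab : (a, s) ≠ (b, t))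
    (hα : dist (0 : Plane) a < s) (hβ : dist (0 : Plane) b < t)
    (t₁ t₂ : ℝ) (ht₁ : 0 < t₁) (ht₂ : 0 < t₂) (hne : t₁ ≠ t₂)
    (htan₁ : Tangent (pt t₁ t₁, t₁) (a, s) ∧ Tangent (pt t₁ t₁, t₁) (b, t))
    (htan₂ : Tangent (pt t₂ t₂, t₂) (a, s) ∧ Tangent (pt t₂ t₂, t₂) (b, t)) :
    ∃ z : Plane, 0 < z 0 ∧ 0 < z 1 ∧ dist z a = s ∧ dist z b = t := by
  obtain ⟨hta1, htb1⟩ := htan₁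
  obtain ⟨hta2, htb2⟩ := htan₂
  have hPa : (a 0)^2 + (a 1)^2 - s^2 < 0 := by
    have h := hα
    rw [dist_zero_pt_left] at h
    nlinarith [Real.sq_sqrt (by positivity : (0:ℝ) ≤ (a 0)^2 + (a 1)^2),
      Real.sqrt_nonneg ((a 0)^2 + (a 1)^2)]
  have hPb : (b 0)^2 + (b 1)^2 - t^2 < 0 := by
    have h := hβ
    rw [dist_zero_pt_left] at h
    nlinarith [Real.sq_sqrt (by positivity : (0:ℝ) ≤ (b 0)^2 + (b 1)^2),
      Real.sqrt_nonneg ((b 0)^2 + (b 1)^2)]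
  have Da1 := process t₁ s a ht₁ hs hα hta1.2
  have Da2 := process t₂ s a ht₂ hs hα hta2.2
  have Db1 := process t₁ t b ht₁ ht hβ htb1.2
  have Db2 := process t₂ t b ht₂ ht hβ htb2.2
  have finish : ∀ x y : ℝ, 0 < x → 0 < y → (x - a 0)^2 + (y - a 1)^2 = s^2 →
      (x - b 0)^2 + (y - b 1)^2 = t^2 →
      ∃ z : Plane, 0 < z 0 ∧ 0 < z 1 ∧ dist z a = s ∧ dist z b = t := by
    intro x y hx hy h1 h2
    refine ⟨pt x y, hx, hy, ?_, ?_⟩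
    · rw [dist_pt_left, h1]; exact Real.sqrt_sq hs.le
    · rw [dist_pt_left, h2]; exact Real.sqrt_sq ht.le
  rcases Da1 with ea1 | ⟨ia1, ha1⟩
  · rcases Da2 with ea2 | ⟨ia2, ha2⟩
    · exfalso
      have e1 : t₁^2 - 2*t₁*((a 0) + (a 1) + s) + ((a 0)^2 + (a 1)^2 - s^2) = 0 := by
        linear_combination ea1
      have e2 : t₂^2 - 2*t₂*((a 0) + (a 1) + s) + ((a 0)^2 + (a 1)^2 - s^2) = 0 := by
        linear_combination ea2
      exact hne (L0 t₁ t₂ _ _ ht₁ ht₂ hPa e1 e2)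
    · -- α : external at t₁, internal at t₂
      rcases Db1 with eb1 | ⟨ib1, hb1⟩
      · rcases Db2 with eb2 | ⟨ib2, hb2⟩
        · exfalso
          have e1 : t₁^2 - 2*t₁*((b 0) + (b 1) + t) + ((b 0)^2 + (b 1)^2 - t^2) = 0 := by
            linear_combination eb1
          have e2 : t₂^2 - 2*t₂*((b 0) + (b 1) + t) + ((b 0)^2 + (b 1)^2 - t^2) = 0 := by
            linear_combination eb2
          exact hne (L0 t₁ t₂ _ _ ht₁ ht₂ hPb e1 e2)
        · obtain ⟨x, y, hx, hy, h1, h2⟩ :=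
            main_scalar (a 0) (a 1) (b 0) (b 1) s t t₁ t₂ hs ht ht₁ ht₂ ha2 hb2 hPa
              ea1 ia2 eb1 ib2
          exact finish x y hx hy h1 h2
      · rcases Db2 with eb2 | ⟨ib2, hb2⟩
        · exfalso
          have qa1 : t₁^2 - 2*t₁*(((a 0) + (a 1)) + s) + ((a 0)^2 + (a 1)^2 - s^2) = 0 := by
            linear_combination ea1
          have qa2 : t₂^2 - 2*t₂*(((a 0) + (a 1)) - s) + ((a 0)^2 + (a 1)^2 - s^2) = 0 := by
            linear_combination ia2
          have qb2 : t₂^2 - 2*t₂*(((b 0) + (b 1)) + t) + ((b 0)^2 + (b 1)^2 - t^2) = 0 := by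
            linear_combination eb2
          have qb1 : t₁^2 - 2*t₁*(((b 0) + (b 1)) - t) + ((b 0)^2 + (b 1)^2 - t^2) = 0 := by
            linear_combination ib1
          have o1 := Lord t₁ t₂ s _ _ ht₁ ht₂ hs hPa qa1 qa2
          have o2 := Lord t₂ t₁ t _ _ ht₂ ht₁ ht hPb qb2 qb1
          linarith
        · exfalso
          have e1 : t₁^2 - 2*t₁*((b 0) + (b 1) - t) + ((b 0)^2 + (b 1)^2 - t^2) = 0 := by
            linear_combination ib1
          have e2 : t₂^2 - 2*t₂*((b 0) + (b 1) - t) + ((b 0)^2 + (b 1)^2 - t^2) = 0 := by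
            linear_combination ib2
          exact hne (L0 t₁ t₂ _ _ ht₁ ht₂ hPb e1 e2)
  · rcases Da2 with ea2 | ⟨ia2, ha2⟩
    · -- α : internal at t₁, external at t₂
      rcases Db1 with eb1 | ⟨ib1, hb1⟩
      · rcases Db2 with eb2 | ⟨ib2, hb2⟩
        · exfalso
          have e1 : t₁^2 - 2*t₁*((b 0) + (b 1) + t) + ((b 0)^2 + (b 1)^2 - t^2) = 0 := by
            linear_combination eb1
          have e2 : t₂^2 - 2*t₂*((b 0) + (b 1) + t) + ((b 0)^2 + (b 1)^2 - t^2) = 0 := by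
            linear_combination eb2
          exact hne (L0 t₁ t₂ _ _ ht₁ ht₂ hPb e1 e2)
        · exfalso
          have qa2 : t₂^2 - 2*t₂*(((a 0) + (a 1)) + s) + ((a 0)^2 + (a 1)^2 - s^2) = 0 := by
            linear_combination ea2
          have qa1 : t₁^2 - 2*t₁*(((a 0) + (a 1)) - s) + ((a 0)^2 + (a 1)^2 - s^2) = 0 := by
            linear_combination ia1
          have qb1 : t₁^2 - 2*t₁*(((b 0) + (b 1)) + t) + ((b 0)^2 + (b 1)^2 - t^2) = 0 := by
            linear_combination eb1
          have qb2 : t₂^2 - 2*t₂*(((b 0) + (b 1)) - t) + ((b 0)^2 + (b 1)^2 - t^2) = 0 := by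
            linear_combination ib2
          have o1 := Lord t₂ t₁ s _ _ ht₂ ht₁ hs hPa qa2 qa1
          have o2 := Lord t₁ t₂ t _ _ ht₁ ht₂ ht hPb qb1 qb2
          linarith
      · rcases Db2 with eb2 | ⟨ib2, hb2⟩
        · obtain ⟨x, y, hx, hy, h1, h2⟩ :=
            main_scalar (a 0) (a 1) (b 0) (b 1) s t t₂ t₁ hs ht ht₂ ht₁ ha1 hb1 hPa
              ea2 ia1 eb2 ib1
          exact finish x y hx hy h1 h2
        · exfalso
          have e1 : t₁^2 - 2*t₁*((b 0) + (b 1) - t) + ((b 0)^2 + (b 1)^2 - t^2) = 0 := by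
            linear_combination ib1
          have e2 : t₂^2 - 2*t₂*((b 0) + (b 1) - t) + ((b 0)^2 + (b 1)^2 - t^2) = 0 := by
            linear_combination ib2
          exact hne (L0 t₁ t₂ _ _ ht₁ ht₂ hPb e1 e2)
    · exfalso
      have e1 : t₁^2 - 2*t₁*((a 0) + (a 1) - s) + ((a 0)^2 + (a 1)^2 - s^2) = 0 := by
        linear_combination ia1
      have e2 : t₂^2 - 2*t₂*((a 0) + (a 1) - s) + ((a 0)^2 + (a 1)^2 - s^2) = 0 := by
        linear_combination ia2
      exact hne (L0 t₁ t₂ _ _ ht₁ ht₂ hPa e1 e2)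
end
end

section
/- Let α = (a, s) be a circle containing the origin strictly inside (dist 0 a < s; type I), and let β = (b, t) be a circle with the origin strictly outside (dist 0 b > t; type II) that crosses both sides of the second quadrant: there are points p and q on β with p₁ < 0, p₂ = 0 and q₁ = 0, q₂ > 0. Suppose there exist two distinct reals t₁, t₂ > 0 such that for each i the circle with center (tᵢ, tᵢ) and radius tᵢ is tangent to both α and β. Then α and β have a common point in the open first quadrant. -/
noncomputable section

set_option maxHeartbeats 600000

namespace L15aux

lemma pt_zero (x y : ℝ) : pt x y 0 = x := rfl
lemma pt_one (x y : ℝ) : pt x y 1 = y := rfl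

lemma dist_coord (x y : Plane) : dist x y = Real.sqrt ((x 0 - y 0)^2 + (x 1 - y 1)^2) := by
  rw [EuclideanSpace.dist_eq, Fin.sum_univ_two]
  simp [Real.dist_eq, sq_abs]

lemma dist_sq (x y : Plane) : dist x y ^ 2 = (x 0 - y 0)^2 + (x 1 - y 1)^2 := by
  rw [dist_coord, Real.sq_sqrt] ; positivity

lemma dist_eq_of (x y : Plane) (r : ℝ) (hr : 0 ≤ r)
    (h : (x 0 - y 0)^2 + (x 1 - y 1)^2 = r^2) : dist x y = r := by
  rw [dist_coord, h, Real.sqrt_sq hr]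

lemma coord_of_dist (x y : Plane) (r : ℝ) (h : dist x y = r) :
    (x 0 - y 0)^2 + (x 1 - y 1)^2 = r^2 := by
  rw [← dist_sq, h]

lemma snd_pos_of_on_beta (b0 b1 t z0 z1 : ℝ) (hb0 : b0 < 0) (hb1 : 0 < b1)
    (hB : t^2 < b0^2 + b1^2) (hz : (z0 - b0)^2 + (z1 - b1)^2 = t^2) (hz0 : 0 ≤ z0) :
    0 < z1 := by
  nlinarith [mul_nonneg hz0 (by linarith : (0:ℝ) ≤ -b0), sq_nonneg z0, sq_nonneg z1,
    mul_pos hb1 hb1]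

lemma v_lt_s (a0 a1 s v : ℝ) (hs : 0 < s) (hv : 0 < v)
    (hA : a0^2 + a1^2 < s^2) (Eva : (v - a0)^2 + (v - a1)^2 = (v - s)^2) : v < s := by
  by_contra h
  push_neg at h
  have h1 : (v - a0)^2 ≤ (v - s)^2 := by nlinarith [sq_nonneg (v - a1)]
  have h2 : s ≤ a0 := by
    by_contra h2
    push_neg at h2
    have hm := mul_pos (show (0:ℝ) < s - a0 by linarith)
      (show (0:ℝ) < 2*v - a0 - s by linarith)
    nlinarith [h1, hm]
  have h3 : s*s ≤ a0 * a0 := mul_self_le_mul_self hs.le h2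
  nlinarith [sq_nonneg a1, h3]

lemma first_nonneg (w x y : ℝ) (hw : 0 < w) (h : (x - w)^2 + (y - w)^2 = w^2) : 0 ≤ x := by
  by_contra hx
  push_neg at hx
  have hm := mul_pos (show (0:ℝ) < -x by linarith) (show (0:ℝ) < 2*w - x by linarith)
  nlinarith [sq_nonneg (y - w)]

lemma snd_eq_of_zero (w x y : ℝ) (h : (x - w)^2 + (y - w)^2 = w^2) (hx : x = 0) : y = w := by
  have h2 : (y - w)^2 = 0 := by rw [hx] at h; nlinarith
  have := pow_eq_zero_iff (n := 2) (by norm_num) |>.1 h2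
  linarith

lemma rad_ge (b0 b1 t x y : ℝ) (hb0 : b0 < 0) (hx : 0 ≤ x)
    (h : (x - b0)^2 + (y - b1)^2 = t^2) : b0^2 ≤ t^2 - (y - b1)^2 := by
  nlinarith [mul_nonneg hx (by linarith : (0:ℝ) ≤ -b0), sq_nonneg x]

lemma sq_cancel (u v : ℝ) (h : (u - v)^2 = 0) : u = v := by
  have := pow_eq_zero_iff (n := 2) (by norm_num) |>.1 h
  linarith

lemma between_sq (b1 yi yo y0 : ℝ) (h1 : yi < y0) (h2 : y0 < yo) :
    (y0 - b1)^2 < max ((yi - b1)^2) ((yo - b1)^2) := by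
  rcases le_or_gt b1 y0 with h3 | h3
  · exact lt_max_of_lt_right (by nlinarith)
  · exact lt_max_of_lt_left (by nlinarith)

lemma core (a b : Plane) (s t u v : ℝ) (hs : 0 < s) (ht : 0 < t) (hu : 0 < u)
    (hv : 0 < v) (huv : u ≠ v)
    (hA : a 0 ^ 2 + a 1 ^ 2 < s ^ 2)
    (hb0 : b 0 < 0) (hb1 : 0 < b 1) (hB : t ^ 2 < b 0 ^ 2 + b 1 ^ 2)
    (dua : dist (pt u u) a = u + s) (dva : dist (pt v v) a = |v - s|)
    (dub : dist (pt u u) b = u + t) (dvb : dist (pt v v) b = v + t) :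
    ∃ z : Plane, 0 < z 0 ∧ 0 < z 1 ∧ dist z a = s ∧ dist z b = t := by
  have hvt : (0:ℝ) < v + t := by linarith
  have hut : (0:ℝ) < u + t := by linarith
  have Eva : (v - a 0)^2 + (v - a 1)^2 = (v - s)^2 := by
    have h := coord_of_dist _ _ _ dva
    rw [pt_zero, pt_one] at h
    rwa [sq_abs] at h
  have Eub : (u - b 0)^2 + (u - b 1)^2 = (u + t)^2 := by
    have h := coord_of_dist _ _ _ dub
    rwa [pt_zero, pt_one] at h
  have Evb : (v - b 0)^2 + (v - b 1)^2 = (v + t)^2 := by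
    have h := coord_of_dist _ _ _ dvb
    rwa [pt_zero, pt_one] at h
  have hvs : v < s := v_lt_s (a 0) (a 1) s v hs hv hA Eva
  have dva' : dist (pt v v) a = s - v := by
    rw [dva, abs_of_nonpos (by linarith)]; ring
  -- tangency points
  set Tin : Plane := pt (v + (v/(v+t))*(b 0 - v)) (v + (v/(v+t))*(b 1 - v)) with hTin
  set Tout : Plane := pt (u + (u/(u+t))*(b 0 - u)) (u + (u/(u+t))*(b 1 - u)) with hTout
  have dTc : dist Tin (pt v v) = v := by
    apply dist_eq_of _ _ _ hv.le
    rw [hTin]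
    rw [pt_zero, pt_one, pt_zero, pt_one]
    field_simp
    linear_combination Evb
  have dTb : dist Tin b = t := by
    apply dist_eq_of _ _ _ ht.le
    rw [hTin, pt_zero, pt_one]
    field_simp
    linear_combination (t^2) * Evb
  have dOc : dist Tout (pt u u) = u := by
    apply dist_eq_of _ _ _ hu.le
    rw [hTout, pt_zero, pt_one, pt_zero, pt_one]
    field_simp
    linear_combination Eub
  have dOb : dist Tout b = t := by
    apply dist_eq_of _ _ _ ht.le
    rw [hTout, pt_zero, pt_one]
    field_simp
    linear_combination (t^2) * Eub
  have dTa_le : dist Tin a ≤ s := by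
    calc dist Tin a ≤ dist Tin (pt v v) + dist (pt v v) a := dist_triangle _ _ _
    _ = v + (s - v) := by rw [dTc, dva']
    _ = s := by ring
  have dOa_ge : s ≤ dist Tout a := by
    have h := dist_triangle (pt u u) Tout a
    rw [dua, dist_comm (pt u u) Tout, dOc] at h
    linarith
  have EinC : (Tin 0 - v)^2 + (Tin 1 - v)^2 = v^2 := by
    have h := coord_of_dist _ _ _ dTc
    rwa [pt_zero, pt_one] at h
  have EoutC : (Tout 0 - u)^2 + (Tout 1 - u)^2 = u^2 := by
    have h := coord_of_dist _ _ _ dOc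
    rwa [pt_zero, pt_one] at h
  have hTin0 : 0 ≤ Tin 0 := first_nonneg v (Tin 0) (Tin 1) hv EinC
  have hTout0 : 0 ≤ Tout 0 := first_nonneg u (Tout 0) (Tout 1) hu EoutC
  have EinB : (Tin 0 - b 0)^2 + (Tin 1 - b 1)^2 = t^2 := coord_of_dist _ _ _ dTb
  have EoutB : (Tout 0 - b 0)^2 + (Tout 1 - b 1)^2 = t^2 := coord_of_dist _ _ _ dOb
  -- exit case: Tin on alpha
  rcases eq_or_lt_of_le dTa_le with hin | hin
  · rcases eq_or_lt_of_le hTin0 with h0 | h0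
    · exfalso
      have hT1 : Tin 1 = v := snd_eq_of_zero v (Tin 0) (Tin 1) EinC h0.symm
      have hx : (0:ℝ) = v + (v/(v+t))*(b 0 - v) := by rw [h0, hTin, pt_zero]
      have hy : v + (v/(v+t))*(b 1 - v) = v := by rw [hTin, pt_one] at hT1; exact hT1
      have hmul : (v + v/(v+t)*(b 0 - v)) * (v+t) = v*(b 0 + t) := by
        field_simp
        ring
      have h2 : v*(b 0 + t) = 0 := by rw [← hmul, ← hx]; ring
      have hb0v : b 0 = -t := by
        rcases mul_eq_zero.1 h2 with h' | h'
        · exact absurd h' hv.ne'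
        · linarith
      have hmul2 : (v/(v+t)*(b 1 - v)) * (v+t) = v*(b 1 - v) := by
        field_simp
      have hz : v/(v+t)*(b 1 - v) = 0 := by linarith
      have h3 : v*(b 1 - v) = 0 := by rw [← hmul2, hz]; ring
      have hb1v : b 1 = v := by
        rcases mul_eq_zero.1 h3 with h' | h'
        · exact absurd h' hv.ne'
        · linarith
      apply huv
      apply sq_cancel
      rw [hb0v, hb1v] at Eub
      linarith [Eub]
    · exact ⟨Tin, h0, snd_pos_of_on_beta (b 0) (b 1) t _ _ hb0 hb1 hB EinB h0.le, hin, dTb⟩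
  rcases eq_or_lt_of_le dOa_ge with hout | hout
  · rcases eq_or_lt_of_le hTout0 with h0 | h0
    · exfalso
      have hT1 : Tout 1 = u := snd_eq_of_zero u (Tout 0) (Tout 1) EoutC h0.symm
      have hx : (0:ℝ) = u + (u/(u+t))*(b 0 - u) := by rw [h0, hTout, pt_zero]
      have hy : u + (u/(u+t))*(b 1 - u) = u := by rw [hTout, pt_one] at hT1; exact hT1
      have hmul : (u + u/(u+t)*(b 0 - u)) * (u+t) = u*(b 0 + t) := by
        field_simp
        ring
      have h2 : u*(b 0 + t) = 0 := by rw [← hmul, ← hx]; ring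
      have hb0v : b 0 = -t := by
        rcases mul_eq_zero.1 h2 with h' | h'
        · exact absurd h' hu.ne'
        · linarith
      have hmul2 : (u/(u+t)*(b 1 - u)) * (u+t) = u*(b 1 - u) := by
        field_simp
      have hz : u/(u+t)*(b 1 - u) = 0 := by linarith
      have h3 : u*(b 1 - u) = 0 := by rw [← hmul2, hz]; ring
      have hb1v : b 1 = u := by
        rcases mul_eq_zero.1 h3 with h' | h'
        · exact absurd h' hu.ne'
        · linarith
      apply huv
      apply sq_cancel
      rw [hb0v, hb1v] at Evb
      linarith [Evb]
    · exact ⟨Tout, h0, snd_pos_of_on_beta (b 0) (b 1) t _ _ hb0 hb1 hB EoutB h0.le,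
        hout.symm, dOb⟩
  -- main case : IVT
  set g : ℝ → ℝ := fun y =>
    Real.sqrt ((b 0 + Real.sqrt (t^2 - (y - b 1)^2) - a 0)^2 + (y - a 1)^2) with hg
  have hgc : Continuous g := by
    apply Real.continuous_sqrt.comp
    apply Continuous.add
    · apply Continuous.pow
      apply Continuous.sub
      · exact continuous_const.add (Real.continuous_sqrt.comp (by fun_prop))
      · exact continuous_const
    · fun_prop
  have hgval : ∀ z : Plane, dist z b = t → 0 ≤ z 0 → g (z 1) = dist z a := by
    intro z hz hz0
    have hzc : (z 0 - b 0)^2 + (z 1 - b 1)^2 = t^2 := coord_of_dist _ _ _ hz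
    have hx : Real.sqrt (t^2 - (z 1 - b 1)^2) = z 0 - b 0 := by
      rw [show t^2 - (z 1 - b 1)^2 = (z 0 - b 0)^2 by linarith]
      exact Real.sqrt_sq (by linarith)
    rw [dist_coord z a, hg]
    simp only
    rw [hx]
    ring_nf
  have gin : g (Tin 1) < s := by rw [hgval Tin dTb hTin0]; exact hin
  have gout : s < g (Tout 1) := by rw [hgval Tout dOb hTout0]; exact hout
  obtain ⟨y0, hy0mem, hy0⟩ :
      ∃ y0, (y0 ∈ Set.Ioo (Tin 1) (Tout 1) ∨ y0 ∈ Set.Ioo (Tout 1) (Tin 1)) ∧ g y0 = s := by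
    rcases le_total (Tin 1) (Tout 1) with hle | hle
    · obtain ⟨y0, hmem, hval⟩ := intermediate_value_Ioo hle hgc.continuousOn ⟨gin, gout⟩
      exact ⟨y0, Or.inl hmem, hval⟩
    · obtain ⟨y0, hmem, hval⟩ := intermediate_value_Ioo' hle hgc.continuousOn ⟨gin, gout⟩
      exact ⟨y0, Or.inr hmem, hval⟩
  have hyb : (y0 - b 1)^2 < max ((Tin 1 - b 1)^2) ((Tout 1 - b 1)^2) := by
    rcases hy0mem with ⟨h1, h2⟩ | ⟨h1, h2⟩
    · exact between_sq (b 1) (Tin 1) (Tout 1) y0 h1 h2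
    · have := between_sq (b 1) (Tout 1) (Tin 1) y0 h1 h2
      rwa [max_comm] at this
  have hri : b 0 ^2 ≤ t^2 - (Tin 1 - b 1)^2 :=
    rad_ge (b 0) (b 1) t (Tin 0) (Tin 1) hb0 hTin0 EinB
  have hro : b 0 ^2 ≤ t^2 - (Tout 1 - b 1)^2 :=
    rad_ge (b 0) (b 1) t (Tout 0) (Tout 1) hb0 hTout0 EoutB
  have hrad : b 0 ^2 < t^2 - (y0 - b 1)^2 := by
    rcases max_cases ((Tin 1 - b 1)^2) ((Tout 1 - b 1)^2) with ⟨hm, _⟩ | ⟨hm, _⟩ <;>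
      rw [hm] at hyb <;> linarith
  have hrad0 : 0 ≤ t^2 - (y0 - b 1)^2 := le_trans (sq_nonneg _) hrad.le
  set x0 : ℝ := b 0 + Real.sqrt (t^2 - (y0 - b 1)^2) with hx0def
  have hx0 : 0 < x0 := by
    have h1 : Real.sqrt (b 0 ^2) < Real.sqrt (t^2 - (y0 - b 1)^2) :=
      Real.sqrt_lt_sqrt (sq_nonneg _) hrad
    rw [Real.sqrt_sq_eq_abs, abs_of_neg hb0] at h1
    rw [hx0def]; linarith
  have hzb : (x0 - b 0)^2 + (y0 - b 1)^2 = t^2 := by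
    have hd : x0 - b 0 = Real.sqrt (t^2 - (y0 - b 1)^2) := by rw [hx0def]; ring
    rw [hd, Real.sq_sqrt hrad0]
    ring
  refine ⟨pt x0 y0, ?_, ?_, ?_, ?_⟩
  · rw [pt_zero]; exact hx0
  · rw [pt_one]
    exact snd_pos_of_on_beta (b 0) (b 1) t x0 y0 hb0 hb1 hB hzb hx0.le
  · rw [dist_coord, pt_zero, pt_one, ← hy0, hg]
  · apply dist_eq_of _ _ _ ht.le
    rw [pt_zero, pt_one]
    exact hzb

end L15aux

open L15aux in
/-- Lemma 15: a type-I circle and a type-II circle crossing both sides of the second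
quadrant, having two common tangent circles inscribed in the first quadrant, must meet in
the open first quadrant. -/
theorem typeI_typeII_two_common_solutions_intersect
    (a b : Plane) (s t : ℝ) (hs : 0 < s) (ht : 0 < t)
    (hα : dist (0 : Plane) a < s) (hβ : t < dist (0 : Plane) b)
    (p q : Plane)
    (hp : dist p b = t ∧ p 0 < 0 ∧ p 1 = 0)
    (hq : dist q b = t ∧ q 0 = 0 ∧ 0 < q 1)
    (t₁ t₂ : ℝ) (ht₁ : 0 < t₁) (ht₂ : 0 < t₂) (hne : t₁ ≠ t₂)
    (htan₁ : Tangent (pt t₁ t₁, t₁) (a, s) ∧ Tangent (pt t₁ t₁, t₁) (b, t))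
    (htan₂ : Tangent (pt t₂ t₂, t₂) (a, s) ∧ Tangent (pt t₂ t₂, t₂) (b, t)) :
    ∃ z : Plane, 0 < z 0 ∧ 0 < z 1 ∧ dist z a = s ∧ dist z b = t := by
  obtain ⟨hpb, hp0, hp1⟩ := hp
  obtain ⟨hqb, hq0, hq1⟩ := hq
  have hzero : ∀ i : Fin 2, (0 : Plane) i = 0 := fun i => rfl
  -- squared basic facts
  have hA2 : a 0 ^ 2 + a 1 ^ 2 < s ^ 2 := by
    have h1 := coord_of_dist (0 : Plane) a (dist (0:Plane) a) rfl
    rw [hzero 0, hzero 1] at h1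
    have h2 : dist (0:Plane) a ^ 2 < s ^ 2 := by
      have := dist_nonneg (x := (0:Plane)) (y := a)
      nlinarith
    nlinarith [h1, h2]
  have hB2 : t ^ 2 < b 0 ^ 2 + b 1 ^ 2 := by
    have h1 := coord_of_dist (0 : Plane) b (dist (0:Plane) b) rfl
    rw [hzero 0, hzero 1] at h1
    have h2 : t ^ 2 < dist (0:Plane) b ^ 2 := by
      have := dist_nonneg (x := (0:Plane)) (y := b)
      nlinarith
    nlinarith [h1, h2]
  have hpc : (p 0 - b 0)^2 + (0 - b 1)^2 = t^2 := by
    have h := coord_of_dist _ _ _ hpb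
    rwa [hp1] at h
  have hqc : (0 - b 0)^2 + (q 1 - b 1)^2 = t^2 := by
    have h := coord_of_dist _ _ _ hqb
    rwa [hq0] at h
  have hb0 : b 0 < 0 := by
    by_contra h
    push_neg at h
    have hm := mul_nonneg (le_of_lt (show (0:ℝ) < -(p 0) by linarith)) h
    nlinarith [hpc, hB2, sq_nonneg (p 0)]
  have hb1 : 0 < b 1 := by
    by_contra h
    push_neg at h
    have hm := mul_nonneg (le_of_lt (show (0:ℝ) < q 1 by linarith)) (by linarith : (0:ℝ) ≤ -(b 1))
    nlinarith [hqc, hB2, sq_nonneg (q 1)]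
  -- external tangency to beta
  have hdb : ∀ w : ℝ, 0 < w → (dist (pt w w) b = w + t ∨ dist (pt w w) b = |w - t|) →
      dist (pt w w) b = w + t := by
    intro w hw hcase
    rcases hcase with h | h
    · exact h
    exfalso
    rcases le_or_gt w t with hwt | hwt
    · have habs : dist (pt w w) b = t - w := by
        rw [h, abs_of_nonpos (by linarith)]; ring
      have h2 : dist (pt w 0) (pt w w) = w := by
        apply dist_eq_of _ _ _ hw.le
        rw [pt_zero, pt_one, pt_zero, pt_one]
        ring
      have h1 : dist (pt w 0) b ≤ t := by
        calc dist (pt w 0) b ≤ dist (pt w 0) (pt w w) + dist (pt w w) b := dist_triangle _ _ _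
        _ = w + (t - w) := by rw [h2, habs]
        _ = t := by ring
      have h3 : (w - b 0)^2 + (0 - b 1)^2 ≤ t^2 := by
        have h4 := coord_of_dist (pt w 0) b _ rfl
        rw [pt_zero, pt_one] at h4
        nlinarith [dist_nonneg (x := pt w 0) (y := b), h1]
      have hm := mul_pos hw (show (0:ℝ) < w - 2 * b 0 by linarith)
      nlinarith [h3, hB2]
    · have habs : dist (pt w w) b = w - t := by
        rw [h, abs_of_nonneg (by linarith)]
      have h1 : dist p (pt w w) ≤ w := by
        calc dist p (pt w w) ≤ dist p b + dist b (pt w w) := dist_triangle _ _ _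
        _ = t + (w - t) := by rw [hpb, dist_comm b (pt w w), habs]
        _ = w := by ring
      have h4 := coord_of_dist p (pt w w) _ rfl
      rw [pt_zero, pt_one, hp1] at h4
      have h5 : (p 0 - w)^2 + (0 - w)^2 ≤ w^2 := by
        nlinarith [dist_nonneg (x := p) (y := pt w w), h1]
      nlinarith [sq_nonneg (p 0 - w), h5]
  have dub : dist (pt t₁ t₁) b = t₁ + t := hdb t₁ ht₁ htan₁.2.2
  have dvb : dist (pt t₂ t₂) b = t₂ + t := hdb t₂ ht₂ htan₂.2.2
  -- tangency type to alpha
  have sqa : ∀ w r : ℝ, dist (pt w w) a = r → (w - a 0)^2 + (w - a 1)^2 = r^2 := by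
    intro w r h
    have h2 := coord_of_dist _ _ _ h
    rwa [pt_zero, pt_one] at h2
  rcases htan₁.1.2 with h1 | h1 <;> rcases htan₂.1.2 with h2 | h2
  · exfalso
    have E1 := sqa t₁ (t₁ + s) h1
    have E2 := sqa t₂ (t₂ + s) h2
    have key : (t₁ - t₂) * (t₁ + t₂ - 2*(a 0 + a 1 + s)) = 0 := by linear_combination E1 - E2
    have hsum := (mul_eq_zero.1 key).resolve_left (sub_ne_zero.2 hne)
    have hAt : a 0 ^2 + a 1 ^2 - s^2 = t₁ * t₂ := by linear_combination E1 - t₁ * hsum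
    have hm := mul_pos ht₁ ht₂
    linarith
  · exact core a b s t t₁ t₂ hs ht ht₁ ht₂ hne hA2 hb0 hb1 hB2 h1 h2 dub dvb
  · have h := core a b s t t₂ t₁ hs ht ht₂ ht₁ (Ne.symm hne) hA2 hb0 hb1 hB2 h2 h1 dvb dub
    exact h
  · exfalso
    have E1 : (t₁ - a 0)^2 + (t₁ - a 1)^2 = (t₁ - s)^2 := by
      have := sqa t₁ (|t₁ - s|) h1
      rwa [sq_abs] at this
    have E2 : (t₂ - a 0)^2 + (t₂ - a 1)^2 = (t₂ - s)^2 := by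
      have := sqa t₂ (|t₂ - s|) h2
      rwa [sq_abs] at this
    have key : (t₁ - t₂) * (t₁ + t₂ - 2*(a 0 + a 1 - s)) = 0 := by linear_combination E1 - E2
    have hsum := (mul_eq_zero.1 key).resolve_left (sub_ne_zero.2 hne)
    have hAt : a 0 ^2 + a 1 ^2 - s^2 = t₁ * t₂ := by linear_combination E1 - t₁ * hsum
    have hm := mul_pos ht₁ ht₂
    linarith
end
end
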